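/- Let δ : ℕ → [0,1] satisfy δ(n) → 1 as n → ∞. Then there exist constants K₁, K₂ > 0 and N such that for all n ≥ N, K₁·max{1−δ(n), 1/n} ≤ (f⁺(n,δ(n))/n!)^{1/n} ≤ K₂·max{1−δ(n), 1/n}. -/

import Mathlib

/-- The number of linear extensions of a partial order `P` on `n` points:
bijections to `{1, ..., n}` (modeled as `Fin n` with its usual order) that
are strictly monotone with respect to `P`. -/
noncomputable def linExtCount (n : ℕ) (P : PartialOrder (Fin n)) : ℕ :=
  Nat.card {f : Fin n ≃ Fin n // ∀ x y : Fin n, P.lt x y → f x < f y}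

/-- The number of comparable pairs of `P`: each unordered comparable pair
`{x, y}` corresponds to exactly one ordered pair `(x, y)` with `x ≺ y`. -/
noncomputable def compCount (n : ℕ) (P : PartialOrder (Fin n)) : ℕ :=
  Nat.card {p : Fin n × Fin n // P.lt p.1 p.2}

/-- `f⁺(n, δ)`: the maximum number of linear extensions over partial orders on
`n` points with at least `δ·n(n-1)/2` comparable pairs. -/
noncomputable def fPlus (n : ℕ) (δ : ℝ) : ℕ :=
  sSup {m : ℕ | ∃ P : PartialOrder (Fin n),
    δ * ((n : ℝ) * ((n : ℝ) - 1) / 2) ≤ (compCount n P : ℝ) ∧ linExtCount n P = m}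

/-!
Upper bound: a linear extension `f` of `P` is determined by the numbers
`#{y ∥ x | f y < f x} ≤ i(x)`, where `i(x)` counts the points incomparable to `x`, so
`e(P) ≤ ∏ (i(x) + 1)`. By AM-GM and `∑ i(x) = n(n-1) - 2 comp(P) ≤ (1-δ) n(n-1)` this is at most
`((1-δ)(n-1) + 1)^n`, and `n! ≥ (n/e)^n`.

Lower bound: cut `{0, …, n-1}` into `k` consecutive blocks of size `m ≈ (1-δ) n` and let points
of different blocks compare as their blocks do. There are at most `n(m-1)` incomparable ordered
pairs, and every permutation preserving the blocks is a linear extension; by orbit-stabilizer for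
the block map `Fin n → Fin k` there are at least `n!/k^n` of those, so `(e/n!)^{1/n} ≥ 1/k ≥ m/2n`.
-/

section

open Finset Equiv MulAction
open scoped Nat

theorem factorial_card_le_card_stabilizer_mul_pow {α ι : Type*} [Finite α] [Finite ι]
    (f : α → ι) :
    (Nat.card α)! ≤ Nat.card {g : Perm α // f ∘ g = f} * Nat.card ι ^ Nat.card α := by
  have hstab : Nat.card (stabilizer (Perm α)ᵈᵐᵃ f) = Nat.card {g : Perm α // f ∘ g = f} :=
    Nat.card_congr (subtypeEquiv DomMulAct.mk.symm fun _ ↦ DomMulAct.mem_stabilizer_iff)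
  have horbit : Nat.card (orbit (Perm α)ᵈᵐᵃ f) ≤ Nat.card ι ^ Nat.card α := by
    rw [← Nat.card_fun]
    exact Nat.card_le_card_of_injective _ Subtype.val_injective
  calc (Nat.card α)! = Nat.card (Perm α)ᵈᵐᵃ := by
        rw [Nat.card_congr DomMulAct.mk.symm, Nat.card_perm]
    _ = Nat.card {g : Perm α // f ∘ g = f} * Nat.card (orbit (Perm α)ᵈᵐᵃ f) := by
        rw [← hstab, ← (stabilizer (Perm α)ᵈᵐᵃ f).card_mul_index, index_stabilizer,
          Nat.card_coe_set_eq]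
    _ ≤ _ := Nat.mul_le_mul_left _ horbit

theorem prod_le_sum_div_card_pow {ι : Type*} (s : Finset ι) (z : ι → ℝ)
    (hz : ∀ i ∈ s, 0 ≤ z i) : ∏ i ∈ s, z i ≤ ((∑ i ∈ s, z i) / #s) ^ #s := by
  rcases s.eq_empty_or_nonempty with rfl | hs
  · simp
  have hcard : (#s : ℝ) ≠ 0 := by exact_mod_cast hs.card_pos.ne'
  have hw : ∑ _i ∈ s, (#s : ℝ)⁻¹ = 1 := by
    rw [sum_const, nsmul_eq_mul, mul_inv_cancel₀ hcard]
  have amgm := Real.geom_mean_le_arith_mean_weighted s (fun _ ↦ (#s : ℝ)⁻¹) z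
    (fun _ _ ↦ by positivity) hw hz
  rw [← mul_sum, inv_mul_eq_div] at amgm
  calc ∏ i ∈ s, z i = (∏ i ∈ s, z i ^ (#s : ℝ)⁻¹) ^ #s := by
        rw [← prod_pow]
        exact prod_congr rfl fun i hi ↦
          (Real.rpow_inv_natCast_pow (hz i hi) hs.card_pos.ne').symm
    _ ≤ _ := pow_le_pow_left₀ (prod_nonneg fun i hi ↦ Real.rpow_nonneg (hz i hi) _) amgm _

theorem card_filter_equiv_lt {α : Type*} [Fintype α] {n : ℕ} (f : α ≃ Fin n) (a : Fin n) :
    #{y | f y < a} = a := by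
  rw [card_filter, Equiv.sum_comp f (fun z ↦ if z < a then 1 else 0), ← card_filter,
    filter_gt_eq_Iio, Fin.card_Iio]

section Counting

variable {n : ℕ} (P : PartialOrder (Fin n))

open Classical in
noncomputable def incompCount (x : Fin n) : ℕ := #{y | y ≠ x ∧ ¬P.lt x y ∧ ¬P.lt y x}

open Classical in
theorem compCount_eq_sum_card_gt : compCount n P = ∑ x, #{y | P.lt x y} := by
  rw [compCount, Nat.card_eq_fintype_card, Fintype.card_subtype, card_filter,
    Fintype.sum_prod_type]
  simp only [card_filter]

open Classical in
theorem compCount_eq_sum_card_lt : compCount n P = ∑ x, #{y | P.lt y x} := by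
  rw [compCount_eq_sum_card_gt]
  simp only [card_filter]
  exact sum_comm

open Classical in
theorem card_add_two_mul_compCount_add_sum_incompCount :
    n + 2 * compCount n P + ∑ x, incompCount P x = n * n := by
  have hsplit : ∀ x y : Fin n, (if y = x then 1 else 0) + (if P.lt x y then 1 else 0) +
      (if P.lt y x then 1 else 0) + (if y ≠ x ∧ ¬P.lt x y ∧ ¬P.lt y x then 1 else 0) = 1 := by
    intro x y
    by_cases hyx : y = x
    · subst hyx; simp
    by_cases hxy : P.lt x y
    · simp [hyx, hxy, @lt_asymm _ P.toPreorder _ _ hxy]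
    · by_cases h : P.lt y x <;> simp [hyx, hxy, h]
  have hsum := sum_congr rfl fun x (_ : x ∈ univ) ↦ sum_congr rfl fun y (_ : y ∈ univ) ↦
    hsplit x y
  simp only [sum_add_distrib, sum_ite_eq', mem_univ, if_true, sum_const, card_univ,
    Fintype.card_fin, smul_eq_mul, mul_one] at hsum
  rw [two_mul]
  nth_rw 1 [compCount_eq_sum_card_gt P]
  rw [compCount_eq_sum_card_lt P]
  simp only [incompCount, card_filter]
  linarith

theorem le_compCount_iff_sum_incompCount_le (d : ℝ) :
    d * ((n : ℝ) * ((n : ℝ) - 1) / 2) ≤ compCount n P ↔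
      (∑ x, incompCount P x : ℝ) ≤ (1 - d) * ((n : ℝ) * ((n : ℝ) - 1)) := by
  have h : (n : ℝ) + 2 * compCount n P + ∑ x, (incompCount P x : ℝ) = n * n := by
    exact_mod_cast card_add_two_mul_compCount_add_sum_incompCount P
  constructor <;> intro <;> linarith

open Classical in
theorem val_apply_eq_card_lt_add_card_incomp_lt (f : Fin n ≃ Fin n) (hf : ∀ x y, P.lt x y → f x < f y) (x : Fin n) :
    (f x : ℕ) = #{y | P.lt y x} + #{y | (y ≠ x ∧ ¬P.lt x y ∧ ¬P.lt y x) ∧ f y < f x} := by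
  have hsplit : ∀ y, (if f y < f x then 1 else 0) = (if P.lt y x then 1 else 0) +
      (if (y ≠ x ∧ ¬P.lt x y ∧ ¬P.lt y x) ∧ f y < f x then 1 else 0) := by
    intro y
    by_cases hyx : P.lt y x
    · simp [hyx, hf y x hyx]
    by_cases hxy : P.lt x y
    · simp [hyx, hxy, Fin.le_of_lt (hf x y hxy)]
    · by_cases h : y = x <;> simp [hyx, hxy, h]
  rw [← card_filter_equiv_lt f (f x), card_filter, sum_congr rfl fun y _ ↦ hsplit y,
    sum_add_distrib, card_filter, card_filter]

open Classical in
theorem linExtCount_le_prod_incompCount :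
    linExtCount n P ≤ ∏ x, (incompCount P x + 1) := by
  let code (f : {f : Fin n ≃ Fin n // ∀ x y, P.lt x y → f x < f y}) (x : Fin n) :
      Fin (incompCount P x + 1) :=
    ⟨#{y | (y ≠ x ∧ ¬P.lt x y ∧ ¬P.lt y x) ∧ f.1 y < f.1 x},
      Nat.lt_succ_of_le (card_le_card (monotone_filter_right _ fun _ _ h ↦ h.1))⟩
  have hcode : Function.Injective code := by
    intro f g hfg
    ext x : 3
    rw [val_apply_eq_card_lt_add_card_incomp_lt P f.1 f.2, val_apply_eq_card_lt_add_card_incomp_lt P g.1 g.2]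
    exact congrArg (#{y | P.lt y x} + ·) (Fin.val_eq_of_eq (congrFun hfg x))
  calc linExtCount n P ≤ Nat.card (∀ x, Fin (incompCount P x + 1)) :=
        Nat.card_le_card_of_injective code hcode
    _ = ∏ x, (incompCount P x + 1) := by simp

theorem linExtCount_le_factorial : linExtCount n P ≤ n ! :=
  (Nat.card_le_card_of_injective Subtype.val Subtype.val_injective).trans_eq
    ((Nat.card_perm (α := Fin n)).trans (by rw [Nat.card_fin]))

end Counting

abbrev weakOrder {α β : Type*} [Preorder β] (g : α → β) : PartialOrder α where
  le x y := x = y ∨ g x < g y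
  lt x y := g x < g y
  le_refl _ := Or.inl rfl
  le_trans x y z := by
    rintro (rfl | hxy) (rfl | hyz)
    exacts [Or.inl rfl, Or.inr hyz, Or.inr hxy, Or.inr (hxy.trans hyz)]
  lt_iff_le_not_ge x y := by
    constructor
    · rintro h
      exact ⟨Or.inr h, by rintro (rfl | h'); exacts [h.false, h.asymm h']⟩
    · rintro ⟨rfl | h, h'⟩
      exacts [absurd (Or.inl rfl) h', h]
  le_antisymm x y := by
    rintro (rfl | hxy) (h | hyx)
    exacts [rfl, rfl, h.symm, (hxy.asymm hyx).elim]

theorem le_linExtCount_weakOrder_mul_pow {n : ℕ} {ι : Type*} [Preorder ι] [Finite ι]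
    {g : Fin n → ι} (hg : Monotone g) :
    n ! ≤ linExtCount n (weakOrder g) * Nat.card ι ^ n := by
  have hstab := factorial_card_le_card_stabilizer_mul_pow g
  rw [Nat.card_fin] at hstab
  refine hstab.trans (Nat.mul_le_mul_right _ ?_)
  refine Nat.card_le_card_of_injective
    (fun σ ↦ ⟨σ.1, fun x y hxy ↦ hg.reflect_lt ?_⟩) fun σ τ h ↦ Subtype.ext (Subtype.mk.inj h)
  change g x < g y at hxy
  rwa [← congrFun σ.2 x, ← congrFun σ.2 y] at hxy

def blockIndex (n m : ℕ) (x : Fin n) : Fin (n / m + 1) :=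
  ⟨x / m, Nat.lt_succ_of_le (Nat.div_le_div_right x.isLt.le)⟩

theorem blockIndex_monotone (n m : ℕ) : Monotone (blockIndex n m) :=
  fun _ _ h ↦ Nat.div_le_div_right h

open Classical in
theorem incompCount_blockOrder_le {n m : ℕ} (hm : 0 < m) (x : Fin n) :
    incompCount (weakOrder (blockIndex n m)) x ≤ m - 1 := by
  set block : Finset (Fin n) := {y | (y : ℕ) / m = x / m}
  have hblock : #block ≤ m := by
    calc #block ≤ #(range m) := by
          refine card_le_card_of_injOn (fun y ↦ (y : ℕ) % m) (fun y _ ↦ ?_) fun y hy z hz hyz ↦ ?_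
          · simpa using Nat.mod_lt _ hm
          · simp only [block, coe_filter, mem_univ, true_and] at hy hz
            rw [Fin.ext_iff, ← Nat.div_add_mod y m, ← Nat.div_add_mod z m, hy, hz]
            exact congrArg _ hyz
      _ = m := card_range m
  calc incompCount (weakOrder (blockIndex n m)) x ≤ #(block.erase x) := by
        refine card_le_card fun y ↦ ?_
        simp only [block, mem_filter, mem_univ, true_and, mem_erase]
        rintro ⟨hyx, hxy, hyx'⟩
        exact ⟨hyx, le_antisymm (not_lt.1 hxy) (not_lt.1 hyx')⟩
    _ ≤ m - 1 := by
      rw [card_erase_of_mem (by simp [block])]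
      omega

theorem le_compCount_blockOrder {n m : ℕ} {d : ℝ} (hm : 0 < m)
    (hmd : (m : ℝ) - 1 ≤ (1 - d) * ((n : ℝ) - 1)) :
    d * ((n : ℝ) * ((n : ℝ) - 1) / 2) ≤ compCount n (weakOrder (blockIndex n m)) := by
  rw [le_compCount_iff_sum_incompCount_le]
  calc (∑ x, incompCount (weakOrder (blockIndex n m)) x : ℝ) ≤ ∑ _x : Fin n, ((m : ℝ) - 1) :=
        sum_le_sum fun x _ ↦ by
          rw [← Nat.cast_pred hm]; exact_mod_cast incompCount_blockOrder_le hm x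
    _ = n * ((m : ℝ) - 1) := by simp [mul_sub]
    _ ≤ (1 - d) * ((n : ℝ) * ((n : ℝ) - 1)) := by nlinarith [(Nat.cast_nonneg n : (0 : ℝ) ≤ n)]

theorem bddAbove_setOf_linExtCount (n : ℕ) (d : ℝ) :
    BddAbove {m : ℕ | ∃ P : PartialOrder (Fin n),
      d * ((n : ℝ) * ((n : ℝ) - 1) / 2) ≤ (compCount n P : ℝ) ∧ linExtCount n P = m} := by
  refine ⟨n !, ?_⟩
  rintro _ ⟨P, -, rfl⟩
  exact linExtCount_le_factorial P

section FPlus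

variable {n : ℕ} {d : ℝ}

theorem linExtCount_le_fPlus {P : PartialOrder (Fin n)}
    (hP : d * ((n : ℝ) * ((n : ℝ) - 1) / 2) ≤ compCount n P) : linExtCount n P ≤ fPlus n d :=
  le_csSup (bddAbove_setOf_linExtCount n d) ⟨P, hP, rfl⟩

theorem exists_linExtCount_eq_fPlus {P : PartialOrder (Fin n)}
    (hP : d * ((n : ℝ) * ((n : ℝ) - 1) / 2) ≤ compCount n P) :
    ∃ Q : PartialOrder (Fin n),
      d * ((n : ℝ) * ((n : ℝ) - 1) / 2) ≤ compCount n Q ∧ linExtCount n Q = fPlus n d := by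
  refine Nat.sSup_mem ?_ (bddAbove_setOf_linExtCount n d)
  exact ⟨_, P, hP, rfl⟩

theorem fPlus_lower_bound (hn : 2 ≤ n) (hd0 : 0 ≤ d) (hd1 : d ≤ 1) :
    1 / 4 * max (1 - d) (1 / (n : ℝ)) ≤ ((fPlus n d : ℝ) / n !) ^ (n : ℝ)⁻¹ := by
  have hn' : (2 : ℝ) ≤ n := by exact_mod_cast hn
  set m := ⌊(1 - d) * ((n : ℝ) - 1)⌋₊ + 1
  have hm_gt : (1 - d) * ((n : ℝ) - 1) < m := by
    simpa [m] using Nat.lt_floor_add_one ((1 - d) * ((n : ℝ) - 1))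
  have hm_le : (m : ℝ) - 1 ≤ (1 - d) * ((n : ℝ) - 1) := by
    simpa [m] using Nat.floor_le (by nlinarith : 0 ≤ (1 - d) * ((n : ℝ) - 1))
  have hm_one : (1 : ℝ) ≤ m := by exact_mod_cast Nat.succ_pos _
  set k := n / m + 1
  have hk : (k : ℝ) * m ≤ 2 * n := by
    have hmn : m ≤ n := by exact_mod_cast (show (m : ℝ) ≤ n by nlinarith)
    have hkm : k * m ≤ 2 * n := by
      rw [add_mul, one_mul]
      linarith [Nat.div_mul_le_self n m]
    exact_mod_cast hkm
  have hX : (1 / k : ℝ) ^ n ≤ (fPlus n d : ℝ) / n ! := by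
    have hlin := le_linExtCount_weakOrder_mul_pow (blockIndex_monotone n m)
    rw [Nat.card_fin] at hlin
    rw [div_pow, one_pow, div_le_div_iff₀ (by positivity) (by positivity), one_mul]
    exact_mod_cast hlin.trans (Nat.mul_le_mul_right _
      (linExtCount_le_fPlus (le_compCount_blockOrder (Nat.succ_pos _) hm_le)))
  have hM : 1 / 4 * max (1 - d) (1 / (n : ℝ)) ≤ 1 / k := by
    have hM2m : max (1 - d) (1 / (n : ℝ)) ≤ 2 * m / n :=
      max_le (by rw [le_div_iff₀ (by positivity)]; nlinarith)
        (div_le_div_of_nonneg_right (by linarith) (by positivity))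
    calc 1 / 4 * max (1 - d) (1 / (n : ℝ)) ≤ 1 / 4 * (2 * m / n) := by gcongr
      _ = m / (2 * n) := by ring
      _ ≤ 1 / k := by
        rw [div_le_div_iff₀ (by positivity) (by positivity)]
        linarith
  rw [Real.le_rpow_inv_iff_of_pos (by positivity) (by positivity) (by positivity),
    Real.rpow_natCast]
  exact (pow_le_pow_left₀ (by positivity) hM n).trans hX

theorem fPlus_upper_bound (hn : 0 < n) (hd1 : d ≤ 1) :
    ((fPlus n d : ℝ) / n !) ^ (n : ℝ)⁻¹ ≤ 2 * Real.exp 1 * max (1 - d) (1 / (n : ℝ)) := by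
  have hn' : (1 : ℝ) ≤ n := by exact_mod_cast hn
  obtain ⟨P, hP, hPf⟩ := exists_linExtCount_eq_fPlus
    (le_compCount_blockOrder (n := n) (d := d) one_pos
      (by rw [Nat.cast_one, sub_self]; exact mul_nonneg (by linarith) (by linarith)))
  have hsum := (le_compCount_iff_sum_incompCount_le P d).1 hP
  set A := (1 - d) * ((n : ℝ) - 1) + 1
  have hlin : (fPlus n d : ℝ) ≤ A ^ n := by
    rw [← hPf]
    calc (linExtCount n P : ℝ) ≤ ∏ x, ((incompCount P x : ℝ) + 1) := by
          exact_mod_cast linExtCount_le_prod_incompCount P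
      _ ≤ ((∑ x, ((incompCount P x : ℝ) + 1)) / n) ^ n := by
          simpa using prod_le_sum_div_card_pow univ (fun x ↦ (incompCount P x : ℝ) + 1)
            fun x _ ↦ by positivity
      _ ≤ A ^ n := by
          refine pow_le_pow_left₀ (by positivity) ?_ n
          rw [div_le_iff₀ (by positivity), sum_add_distrib]
          simp only [sum_const, card_univ, Fintype.card_fin, nsmul_eq_mul, mul_one]
          linarith
  have hfact : (n : ℝ) ^ n ≤ Real.exp 1 ^ n * n ! := by
    rw [Real.exp_one_pow, ← div_le_iff₀ (by positivity)]
    exact Real.pow_div_factorial_le_exp _ (Nat.cast_nonneg n) n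
  have hX : (fPlus n d : ℝ) / n ! ≤ (Real.exp 1 * A / n) ^ n := by
    rw [div_le_iff₀ (by positivity), div_pow, mul_pow, div_mul_eq_mul_div,
      le_div_iff₀ (by positivity)]
    calc (fPlus n d : ℝ) * (n : ℝ) ^ n ≤ A ^ n * (Real.exp 1 ^ n * n !) :=
          mul_le_mul hlin hfact (by positivity) (by positivity)
      _ = _ := by ring
  have hA : Real.exp 1 * A / n ≤ 2 * Real.exp 1 * max (1 - d) (1 / (n : ℝ)) := by
    rw [div_le_iff₀ (by positivity)]
    have h1 : (1 - d) * n ≤ max (1 - d) (1 / (n : ℝ)) * n :=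
      mul_le_mul_of_nonneg_right (le_max_left _ _) (by positivity)
    have h2 : 1 ≤ max (1 - d) (1 / (n : ℝ)) * n := by
      rw [← div_le_iff₀ (by positivity)]; exact le_max_right _ _
    have := Real.exp_pos 1
    nlinarith
  rw [Real.rpow_inv_le_iff_of_pos (by positivity) (by positivity) (by positivity),
    Real.rpow_natCast]
  exact hX.trans (pow_le_pow_left₀ (by positivity) hA n)

end FPlus

end

theorem fplus_rate_delta_to_one_general (δ : ℕ → ℝ)
    (hδ : ∀ n, 0 ≤ δ n ∧ δ n ≤ 1) :
    ∃ K₁ K₂ : ℝ, ∃ N : ℕ, 0 < K₁ ∧ 0 < K₂ ∧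
      ∀ n : ℕ, N ≤ n →
        K₁ * max (1 - δ n) (1 / (n : ℝ)) ≤
          ((fPlus n (δ n) : ℝ) / (Nat.factorial n : ℝ)) ^ ((n : ℝ)⁻¹) ∧
        ((fPlus n (δ n) : ℝ) / (Nat.factorial n : ℝ)) ^ ((n : ℝ)⁻¹) ≤
          K₂ * max (1 - δ n) (1 / (n : ℝ)) := by
  refine ⟨1 / 4, 2 * Real.exp 1, 2, by norm_num, by positivity, fun n hn ↦ ⟨?_, ?_⟩⟩
  · exact fPlus_lower_bound hn (hδ n).1 (hδ n).2
  · exact fPlus_upper_bound (by omega) (hδ n).2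

theorem fplus_rate_delta_to_one (δ : ℕ → ℝ)
    (hδ : ∀ n, 0 ≤ δ n ∧ δ n ≤ 1)
    (hlim : Filter.Tendsto δ Filter.atTop (nhds 1)) :
    ∃ K₁ K₂ : ℝ, ∃ N : ℕ, 0 < K₁ ∧ 0 < K₂ ∧
      ∀ n : ℕ, N ≤ n →
        K₁ * max (1 - δ n) (1 / (n : ℝ)) ≤
          ((fPlus n (δ n) : ℝ) / (Nat.factorial n : ℝ)) ^ ((n : ℝ)⁻¹) ∧
        ((fPlus n (δ n) : ℝ) / (Nat.factorial n : ℝ)) ^ ((n : ℝ)⁻¹) ≤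
          K₂ * max (1 - δ n) (1 / (n : ℝ)) :=
  fplus_rate_delta_to_one_general δ hδ
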